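/- arXiv:1904.00454 — 6 statements merged into one kernel-verified Lean document; each statement's English description precedes it below -/
import Mathlib

section
/- The log likelihood ratio of the pooled ('average') signal lies strictly between that of the weak and the strong signal: lq < lQq < lQ. -/
/-- `lq < lQq < lQ`. -/
theorem pooled_signal_llr_between
    (p0 pS Q q : ℝ)
    (hp0l : 1/2 ≤ p0) (hp0u : p0 < 1)
    (hpSl : 0 < pS) (hpSu : pS < 1)
    (hQl : pS/2 < Q) (hQu : Q < pS)
    (hql : (1 - pS)/2 < q) (hqu : q < Q * (1 - pS) / pS) :
    Real.log (q / (1 - pS - q)) < Real.log ((Q + q) / (1 - Q - q)) ∧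
      Real.log ((Q + q) / (1 - Q - q)) < Real.log (Q / (pS - Q)) := by
  have hq0 : 0 < q := by nlinarith
  have hQ0 : 0 < Q := by nlinarith
  have hkey : q * pS < Q * (1 - pS) := (lt_div_iff₀ hpSl).mp hqu
  have h1 : q < 1 - pS := by nlinarith
  have hd1 : (0:ℝ) < 1 - pS - q := by linarith
  have hd2 : (0:ℝ) < 1 - Q - q := by linarith
  have hd3 : (0:ℝ) < pS - Q := by linarith
  constructor
  · apply Real.log_lt_log (div_pos hq0 hd1)
    rw [div_lt_div_iff₀ hd1 hd2]
    nlinarith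
  · apply Real.log_lt_log (div_pos (by linarith) hd2)
    rw [div_lt_div_iff₀ hd2 hd3]
    nlinarith
end

section
/- The log likelihood ratio from not observing the opposing strong signal is positive and strictly smaller than that of the pooled signal: 0 < l¬Q < lQq. -/
/-- `0 < l¬Q < lQq`. -/
theorem notStrong_llr_pos_lt_pooled
    (p0 pS Q q : ℝ)
    (hp0l : 1/2 ≤ p0) (hp0u : p0 < 1)
    (hpSl : 0 < pS) (hpSu : pS < 1)
    (hQl : pS/2 < Q) (hQu : Q < pS)
    (hql : (1 - pS)/2 < q) (hqu : q < Q * (1 - pS) / pS) :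
    0 < Real.log ((1 - pS + Q) / (1 - Q)) ∧
      Real.log ((1 - pS + Q) / (1 - Q)) < Real.log ((Q + q) / (1 - Q - q)) := by
  have hQpos : 0 < Q := by linarith
  have h1Q : 0 < 1 - Q := by linarith
  have hq1 : q < 1 - pS := by
    have := (lt_div_iff₀ hpSl).mp hqu
    nlinarith
  have hQq : 0 < 1 - Q - q := by linarith
  have hqpos : 0 < q := by linarith
  constructor
  · apply Real.log_pos
    rw [lt_div_iff₀ h1Q]
    linarith
  · apply Real.log_lt_log
    · exact div_pos (by linarith) h1Q
    · rw [div_lt_div_iff₀ h1Q hQq]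
      nlinarith [mul_pos (by linarith : (0:ℝ) < 2*q - (1-pS)) (by linarith : (0:ℝ) < 2 - pS),
        mul_pos (by linarith : (0:ℝ) < 1 - pS) (by linarith : (0:ℝ) < 2*Q - pS)]
end

section
/- The cutoff characterizes the best response: for every k ∈ [0,1), f ∈ [0,1], and real l, the payoff difference satisfies Δ(l,f) > 0 if and only if l > lk(f), and Δ(l,f) = 0 if and only if l = lk(f). -/
/-- The cutoff log likelihood ratio at congestion cost `k` and fraction `f`. -/
noncomputable def cutoffLLR (k f : ℝ) : ℝ :=
  Real.log ((1 - k + 2*f*k) / (1 + k - 2*f*k))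

/-- The expected payoff difference between actions `ρ` and `λ` for a player with
log likelihood ratio `l` when a fraction `f` of previous players chose `ρ`. -/
noncomputable def payoffDiff (k l f : ℝ) : ℝ :=
  (Real.exp l - 1) / (1 + Real.exp l) + (1 - 2*f) * k

/-!
The belief term `(eˡ - 1) / (1 + eˡ) = 1 - 2 / (1 + eˡ)` is strictly increasing in `l`, and the
congestion term `c = (1 - 2f) k` lies in `(-1, 1)`. The cutoff is exactly the point
`log ((1 - c) / (1 + c))` where the belief term equals `-c`, so `Δ(·, f)` is the belief term minus
its value at the cutoff, and both equivalences are strict monotonicity.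
-/

open Real

lemma exp_sub_one_div_one_add_exp_eq (l : ℝ) :
    (exp l - 1) / (1 + exp l) = 1 - 2 / (1 + exp l) := by
  have : 1 + exp l ≠ 0 := by positivity
  field_simp
  ring

lemma strictMono_exp_sub_one_div_one_add_exp :
    StrictMono fun l : ℝ => (exp l - 1) / (1 + exp l) := by
  intro x y hxy
  simp only [exp_sub_one_div_one_add_exp_eq]
  have hexp : 1 + exp x < 1 + exp y := by gcongr
  have : 2 / (1 + exp y) < 2 / (1 + exp x) := by gcongr
  linarith

lemma exp_sub_one_div_one_add_exp_log_div {c : ℝ} (hc₀ : -1 < c) (hc₁ : c < 1) :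
    (exp (log ((1 - c) / (1 + c))) - 1) / (1 + exp (log ((1 - c) / (1 + c)))) = -c := by
  have h₀ : 0 < 1 - c := by linarith
  have h₁ : 0 < 1 + c := by linarith
  rw [exp_log (div_pos h₀ h₁)]
  field_simp
  ring

lemma abs_one_sub_two_mul_mul_lt_one {k f : ℝ} (hk0 : 0 ≤ k) (hk1 : k < 1) (hf0 : 0 ≤ f)
    (hf1 : f ≤ 1) : |(1 - 2 * f) * k| < 1 := by
  have : |1 - 2 * f| ≤ 1 := abs_le.mpr ⟨by linarith, by linarith⟩
  rw [abs_mul, abs_of_nonneg hk0]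
  nlinarith [abs_nonneg (1 - 2 * f)]

lemma cutoffLLR_eq_log_div (k f : ℝ) :
    cutoffLLR k f = log ((1 - (1 - 2 * f) * k) / (1 + (1 - 2 * f) * k)) := by
  unfold cutoffLLR
  ring_nf

lemma payoffDiff_eq_sub_cutoff {k f : ℝ} (hk0 : 0 ≤ k) (hk1 : k < 1) (hf0 : 0 ≤ f) (hf1 : f ≤ 1)
    (l : ℝ) :
    payoffDiff k l f = (exp l - 1) / (1 + exp l)
      - (exp (cutoffLLR k f) - 1) / (1 + exp (cutoffLLR k f)) := by
  obtain ⟨hc₀, hc₁⟩ := abs_lt.mp (abs_one_sub_two_mul_mul_lt_one hk0 hk1 hf0 hf1)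
  rw [cutoffLLR_eq_log_div, exp_sub_one_div_one_add_exp_log_div hc₀ hc₁, payoffDiff, sub_neg_eq_add]

/-- the cutoff characterizes the best response:
`Δ(l,f) > 0 ↔ l > lk(f)` and `Δ(l,f) = 0 ↔ l = lk(f)`. -/
theorem payoffDiff_pos_iff_cutoff
    (k f l : ℝ) (hk0 : 0 ≤ k) (hk1 : k < 1) (hf0 : 0 ≤ f) (hf1 : f ≤ 1) :
    (0 < payoffDiff k l f ↔ cutoffLLR k f < l) ∧
      (payoffDiff k l f = 0 ↔ l = cutoffLLR k f) := by
  have hmono := strictMono_exp_sub_one_div_one_add_exp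
  rw [payoffDiff_eq_sub_cutoff hk0 hk1 hf0 hf1, sub_pos, sub_eq_zero]
  exact ⟨hmono.lt_iff_lt, hmono.injective.eq_iff⟩
end

section
/- With the numerical parameter values p0 = 1/2, pS = 61/64, Q = 15611/16384, q = 9/256, and k = 1/3, all of the following hold: q > p0·(1−pS); l0 − lQq + lq < 0; l0 + lQq + l¬Q − lQ < 0; l0 − lQq − lQ + lk(1) < 0; l0 − 2·lQq + lQ + lk(1) < 0; l0 + 2·lQq − l¬Q − lQ < 0; and l0 − lQq + l¬Q < 0. -/
/-- the numerical example `p0 = 1/2`, `pS = 61/64`, `Q = 15611/16384`,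
`q = 9/256`, `k = 1/3` satisfies all conditions of Proposition 1. -/
theorem numerical_example_one :
    ∀ p0 pS Q q k : ℝ, p0 = 1/2 → pS = 61/64 → Q = 15611/16384 → q = 9/256 → k = 1/3 →
    q > p0 * (1 - pS) ∧
    Real.log (p0 / (1 - p0)) - Real.log ((Q + q) / (1 - Q - q))
      + Real.log (q / (1 - pS - q)) < 0 ∧
    Real.log (p0 / (1 - p0)) + Real.log ((Q + q) / (1 - Q - q))
      + Real.log ((1 - pS + Q) / (1 - Q)) - Real.log (Q / (pS - Q)) < 0 ∧
    Real.log (p0 / (1 - p0)) - Real.log ((Q + q) / (1 - Q - q))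
      - Real.log (Q / (pS - Q)) + Real.log ((1 + k) / (1 - k)) < 0 ∧
    Real.log (p0 / (1 - p0)) - 2 * Real.log ((Q + q) / (1 - Q - q))
      + Real.log (Q / (pS - Q)) + Real.log ((1 + k) / (1 - k)) < 0 ∧
    Real.log (p0 / (1 - p0)) + 2 * Real.log ((Q + q) / (1 - Q - q))
      - Real.log ((1 - pS + Q) / (1 - Q)) - Real.log (Q / (pS - Q)) < 0 ∧
    Real.log (p0 / (1 - p0)) - Real.log ((Q + q) / (1 - Q - q))
      + Real.log ((1 - pS + Q) / (1 - Q)) < 0 := by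
  intro p0 pS Q q k h0 hS hQ hq hk
  subst h0 hS hQ hq hk
  have e1 : ((1:ℝ)/2) / (1 - 1/2) = 1 := by norm_num
  have e2 : ((15611:ℝ)/16384 + 9/256) / (1 - 15611/16384 - 9/256) = 16187/197 := by norm_num
  have e3 : ((9:ℝ)/256) / (1 - 61/64 - 9/256) = 3 := by norm_num
  have e4 : ((15611:ℝ)/16384) / (61/64 - 15611/16384) = 15611/5 := by norm_num
  have e5 : ((1:ℝ) - 61/64 + 15611/16384) / (1 - 15611/16384) = 16379/773 := by norm_num
  have e6 : ((1:ℝ) + 1/3) / (1 - 1/3) = 2 := by norm_num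
  rw [e1, e2, e3, e4, e5, e6, Real.log_one]
  have hA : Real.log ((16187:ℝ)/197) = Real.log ((16187:ℝ)/197) := rfl
  -- combined log facts
  have m1 : Real.log ((16187:ℝ)/197) + Real.log ((16379:ℝ)/773)
      = Real.log ((16187:ℝ)/197 * (16379/773)) := (Real.log_mul (by norm_num) (by norm_num)).symm
  have m2 : Real.log (2:ℝ) + Real.log ((15611:ℝ)/5)
      = Real.log ((2:ℝ) * (15611/5)) := (Real.log_mul (by norm_num) (by norm_num)).symm
  have m3 : Real.log ((16379:ℝ)/773) + Real.log ((15611:ℝ)/5)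
      = Real.log ((16379:ℝ)/773 * (15611/5)) := (Real.log_mul (by norm_num) (by norm_num)).symm
  have p1 : (2:ℝ) * Real.log ((16187:ℝ)/197) = Real.log (((16187:ℝ)/197)^2) := by
    rw [Real.log_pow]; push_cast; ring
  have h1 : Real.log (3:ℝ) < Real.log ((16187:ℝ)/197) :=
    Real.log_lt_log (by norm_num) (by norm_num)
  have h2 : Real.log ((16187:ℝ)/197 * (16379/773)) < Real.log ((15611:ℝ)/5) :=
    Real.log_lt_log (by norm_num) (by norm_num)
  have h3 : Real.log (2:ℝ) < Real.log ((16187:ℝ)/197 * (16379/773)) :=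
    Real.log_lt_log (by norm_num) (by norm_num)
  have h4 : Real.log ((2:ℝ) * (15611/5)) < Real.log (((16187:ℝ)/197)^2) :=
    Real.log_lt_log (by norm_num) (by norm_num)
  have h5 : Real.log (((16187:ℝ)/197)^2) < Real.log ((16379:ℝ)/773 * (15611/5)) :=
    Real.log_lt_log (by norm_num) (by norm_num)
  have h6 : Real.log ((16379:ℝ)/773) < Real.log ((16187:ℝ)/197) :=
    Real.log_lt_log (by norm_num) (by norm_num)
  have h7 : Real.log (2:ℝ) < Real.log ((15611:ℝ)/5) :=
    Real.log_lt_log (by norm_num) (by norm_num)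
  have h8 : (0:ℝ) < Real.log ((16187:ℝ)/197) := Real.log_pos (by norm_num)
  refine ⟨by norm_num, by linarith, by linarith, by linarith, by linarith, by linarith, by linarith⟩
end

section
/- In the six-signal conformity model, the log likelihood ratios satisfy all of the following orderings: 0 < lη < lq < lQ; lη < lQqη < lQ; 0 < l¬qQ < lQqη; and 0 < l¬Q < l¬qQ. -/
set_option maxHeartbeats 2000000


/-- orderings of the log likelihood ratios in the six-signal
conformity model: `0 < lη < lq < lQ`, `lη < lQqη < lQ`, `0 < l¬qQ < lQqη`,
and `0 < l¬Q < l¬qQ`. -/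
theorem conformity_llr_orderings
    (pS ps pσ Q q η : ℝ)
    (hpS : 0 < pS) (hps : 0 < ps) (hpσ : 0 < pσ)
    (hsum : pS + ps + pσ = 1)
    (h1 : 1/2 < η / pσ) (h2 : η / pσ < q / ps) (h3 : q / ps < Q / pS)
    (h4 : Q / pS < 1) :
    (0 < Real.log (η / (pσ - η)) ∧
      Real.log (η / (pσ - η)) < Real.log (q / (ps - q)) ∧
      Real.log (q / (ps - q)) < Real.log (Q / (pS - Q))) ∧
    (Real.log (η / (pσ - η)) < Real.log ((Q + q + η) / (1 - Q - q - η)) ∧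
      Real.log ((Q + q + η) / (1 - Q - q - η)) < Real.log (Q / (pS - Q))) ∧
    (0 < Real.log ((pσ + q + Q) / (1 - q - Q)) ∧
      Real.log ((pσ + q + Q) / (1 - q - Q)) < Real.log ((Q + q + η) / (1 - Q - q - η))) ∧
    (0 < Real.log ((ps + pσ + Q) / (1 - Q)) ∧
      Real.log ((ps + pσ + Q) / (1 - Q)) < Real.log ((pσ + q + Q) / (1 - q - Q))) := by
  -- convert ratio hypotheses to products
  have hη2 : pσ < 2 * η := by
    rw [div_lt_div_iff₀ (by norm_num : (0:ℝ) < 2) hpσ] at h1; linarith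
  have hηq : η * ps < q * pσ := (div_lt_div_iff₀ hpσ hps).mp h2
  have hqQ : q * pS < Q * ps := (div_lt_div_iff₀ hps hpS).mp h3
  have hQpS : Q < pS := by
    have := (div_lt_one hpS).mp h4; linarith
  have hη0 : 0 < η := by nlinarith
  have hq0 : 0 < q := by nlinarith
  have hQ0 : 0 < Q := by nlinarith
  have hqps : q < ps := by nlinarith
  have hηpσ : η < pσ := by nlinarith
  have hq2 : ps < 2 * q := by nlinarith
  have hQ2 : pS < 2 * Q := by nlinarith
  have hηQ : η * pS < Q * pσ := by nlinarith
  -- positivity of denominators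
  have d1 : 0 < pσ - η := by linarith
  have d2 : 0 < ps - q := by linarith
  have d3 : 0 < pS - Q := by linarith
  have d4 : 0 < 1 - Q - q - η := by linarith
  have d5 : 0 < 1 - q - Q := by linarith
  have d6 : 0 < 1 - Q := by linarith
  -- positivity of numerators / ratios
  have r1 : 0 < η / (pσ - η) := div_pos hη0 d1
  have r4 : (0:ℝ) < (Q + q + η) / (1 - Q - q - η) := div_pos (by linarith) d4
  have r5 : (0:ℝ) < (pσ + q + Q) / (1 - q - Q) := div_pos (by linarith) d5
  refine ⟨⟨?_, ?_, ?_⟩, ⟨?_, ?_⟩, ⟨?_, ?_⟩, ⟨?_, ?_⟩⟩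
  · exact Real.log_pos ((one_lt_div d1).mpr (by linarith))
  · exact Real.log_lt_log r1 ((div_lt_div_iff₀ d1 d2).mpr (by nlinarith))
  · exact Real.log_lt_log (div_pos hq0 d2) ((div_lt_div_iff₀ d2 d3).mpr (by nlinarith))
  · exact Real.log_lt_log r1 ((div_lt_div_iff₀ d1 d4).mpr (by nlinarith [hηq, hηQ]))
  · exact Real.log_lt_log r4 ((div_lt_div_iff₀ d4 d3).mpr (by nlinarith [hqQ, hηQ]))
  · exact Real.log_pos ((one_lt_div d5).mpr (by linarith))
  · exact Real.log_lt_log r5 ((div_lt_div_iff₀ d5 d4).mpr (by nlinarith [hηq, hηQ, mul_pos (sub_pos.mpr hη2) (by linarith : (0:ℝ) < pσ + ps + pS)]))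
  · exact Real.log_pos ((one_lt_div d6).mpr (by linarith))
  · exact Real.log_lt_log (div_pos (by linarith) d6) ((div_lt_div_iff₀ d6 d5).mpr (by nlinarith [hqQ, mul_pos (sub_pos.mpr hq2) (by linarith : (0:ℝ) < pσ + ps + pS)]))
end

section
/- In the six-signal conformity model, the probability that the second player's action matches the first player's action is strictly larger under the conformity best responses than under the no-conformity best responses: (Q+q+η)(pσ+q+Q) + (1−Q−q−η)(1−q−Q) < (Q+q+η)(pσ+ps+Q) + (1−Q−q−η)(1−Q). -/
/-- in the six-signal conformity model, the probability that player 2's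
action matches player 1's is strictly larger under conformity than without it. -/
theorem conformity_match_probability_larger
    (pS ps pσ Q q η : ℝ)
    (hpS : 0 < pS) (hps : 0 < ps) (hpσ : 0 < pσ)
    (hsum : pS + ps + pσ = 1)
    (h1 : 1/2 < η / pσ) (h2 : η / pσ < q / ps) (h3 : q / ps < Q / pS)
    (h4 : Q / pS < 1) :
    (Q + q + η) * (pσ + q + Q) + (1 - Q - q - η) * (1 - q - Q)
      < (Q + q + η) * (pσ + ps + Q) + (1 - Q - q - η) * (1 - Q) := by
  have hη : 1/2 * pσ < η := (lt_div_iff₀ hpσ).mp h1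
  have hq : 1/2 * ps < q := (lt_div_iff₀ hps).mp (lt_trans h1 h2)
  have hq0 : 0 < q := by nlinarith
  have hQ : 1/2 * pS < Q := (lt_div_iff₀ hpS).mp (lt_trans (lt_trans h1 h2) h3)
  have hQ0 : 0 < Q := by nlinarith
  have hQpS : Q < pS := (div_lt_one hpS).mp h4
  have hqps : q < ps := (div_lt_one hps).mp (lt_trans h3 h4)
  have hηpσ : η < pσ := (div_lt_one hpσ).mp (lt_trans (lt_trans h2 h3) h4)
  have hη0 : 0 < η := by nlinarith
  nlinarith [mul_pos (show (0:ℝ) < Q + q + η by linarith) (show (0:ℝ) < ps - q by linarith),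
    mul_pos hq0 (show (0:ℝ) < 1 - Q - q - η by linarith)]
end
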